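/- Completeness of the transition system at the initial configuration: t*(initial) = t_G, the gold tree is derivable, t_G ∈ D(initial), and the best achievable F1 from the initial configuration is perfect, F1(initial) = 1. -/

import Mathlib

/-!
Formalization of the span-based Structure/Label transition parsing system of
Cross & Huang (2016), "Span-Based Constituency Parsing with a Structure-Label
System and Provably Optimal Dynamic Oracles".

A configuration is `(z, σ, t)` where `z` is the step number, `σ` the stack of
span boundaries and `t` the set of brackets built so far.  A bracket is a
triple `(X, i, j)` with `X` a nonterminal label and `i < j ≤ n` a span.
-/

namespace SpanParser

structure Config (N : Type*) where
  z : ℕ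
  σ : List ℕ
  t : Finset (N × ℕ × ℕ)

variable {N : Type*}

/-- The span of a bracket. -/
def span (b : N × ℕ × ℕ) : ℕ × ℕ := b.2

/-- Top (rightmost) boundary of the stack. -/
def topJ (σ : List ℕ) : ℕ := σ.getLastD 0

/-- Second-to-top boundary of the stack. -/
def topI (σ : List ℕ) : ℕ := σ.dropLast.getLastD 0

/-- Parser actions: shift, combine, label-`X`, and nolabel. -/
inductive Action (N : Type*) where
  | sh : Action N
  | comb : Action N
  | label : N → Action N
  | nolabel : Action N

variable [DecidableEq N]

/-- Applicability of an action at a configuration (for sentence length `n`). -/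
def App (n : ℕ) (c : Config N) : Action N → Prop
  | .sh      => Even c.z ∧ c.σ ≠ [] ∧ topJ c.σ < n
  | .comb    => Even c.z ∧ 3 ≤ c.σ.length
  | .label _ => Odd c.z ∧ 2 ≤ c.σ.length
  | .nolabel => Odd c.z ∧ 2 ≤ c.σ.length ∧ c.z < 4 * n - 1

/-- The result `τ(c)` of applying action `τ` to configuration `c`. -/
def doAct (c : Config N) : Action N → Config N
  | .sh      => ⟨c.z + 1, c.σ ++ [topJ c.σ + 1], c.t⟩
  | .comb    => ⟨c.z + 1, c.σ.dropLast.dropLast ++ [topJ c.σ], c.t⟩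
  | .label X => ⟨c.z + 1, c.σ, insert (X, topI c.σ, topJ c.σ) c.t⟩
  | .nolabel => ⟨c.z + 1, c.σ, c.t⟩

/-- The initial configuration `(0, [0], ∅)`. -/
def initial (N : Type*) : Config N := ⟨0, [0], ∅⟩

/-- One transition step `c ⊢ c'`. -/
def Step (n : ℕ) (c c' : Config N) : Prop := ∃ a, App n c a ∧ c' = doAct c a

/-- `⊢*`: reflexive-transitive closure of the transition relation. -/
def Reaches (n : ℕ) : Config N → Config N → Prop := Relation.ReflTransGen (Step n)

/-- A configuration is valid if it is reachable from the initial configuration. -/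
def Valid (n : ℕ) (c : Config N) : Prop := Reaches n (initial N) c

/-- A final configuration: `σ = [0, n]` and `z = 4n - 2`. -/
def Final (n : ℕ) (c : Config N) : Prop := c.σ = [0, n] ∧ c.z = 4 * n - 2

/-- `D(c)`: the set of trees of final configurations reachable from `c`. -/
def Dset (n : ℕ) (c : Config N) : Set (Finset (N × ℕ × ℕ)) :=
  {t' | ∃ c', Reaches n c c' ∧ Final n c' ∧ c'.t = t'}

/-- `(i,j) ⪯ (p,q)`: span `(i,j)` is encompassed by `(p,q)`, i.e. `p ≤ i < j ≤ q`. -/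
def Enc (s₁ s₂ : ℕ × ℕ) : Prop := s₂.1 ≤ s₁.1 ∧ s₁.1 < s₁.2 ∧ s₁.2 ≤ s₂.2

/-- `(i,j) ≺ (p,q)`: strict encompassment. -/
def SEnc (s₁ s₂ : ℕ × ℕ) : Prop := Enc s₁ s₂ ∧ s₁ ≠ s₂

/-- `tG` is a gold tree for sentence length `n`: valid spans, pairwise-distinct
spans, pairwise non-crossing spans, and exactly one bracket with span `(0, n)`
(uniqueness follows from distinctness of spans). -/
structure IsGold (n : ℕ) (tG : Finset (N × ℕ × ℕ)) : Prop where
  validSpans : ∀ b ∈ tG, (span b).1 < (span b).2 ∧ (span b).2 ≤ n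
  distinctSpans : ∀ b₁ ∈ tG, ∀ b₂ ∈ tG, span b₁ = span b₂ → b₁ = b₂
  noncrossing : ∀ b₁ ∈ tG, ∀ b₂ ∈ tG,
    Enc (span b₁) (span b₂) ∨ Enc (span b₂) (span b₁) ∨
    (span b₁).2 ≤ (span b₂).1 ∨ (span b₂).2 ≤ (span b₁).1
  root : ∃ X, (X, 0, n) ∈ tG

open Classical in
/-- `left(c)`: gold brackets (strictly, at even steps) encompassing the top
span whose left boundary occurs on the stack. -/
noncomputable def leftSet (tG : Finset (N × ℕ × ℕ)) (c : Config N) :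
    Finset (N × ℕ × ℕ) :=
  tG.filter fun b =>
    (if Even c.z then SEnc (topI c.σ, topJ c.σ) (span b)
     else Enc (topI c.σ, topJ c.σ) (span b)) ∧ (span b).1 ∈ c.σ

open Classical in
/-- `right(c)`: gold brackets entirely on the queue. -/
noncomputable def rightSet (tG : Finset (N × ℕ × ℕ)) (c : Config N) :
    Finset (N × ℕ × ℕ) :=
  tG.filter fun b => topJ c.σ ≤ (span b).1

open Classical in
/-- `reach(c)`: the reachable gold brackets (all of `t_G` at the initial
configuration, whose stack has fewer than two boundaries). -/
noncomputable def reach (tG : Finset (N × ℕ × ℕ)) (c : Config N) :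
    Finset (N × ℕ × ℕ) :=
  if c.σ.length < 2 then tG else leftSet tG c ∪ rightSet tG c

/-- The optimal tree `t*(c) = t ∪ reach(c)`. -/
noncomputable def tstar (tG : Finset (N × ℕ × ℕ)) (c : Config N) :
    Finset (N × ℕ × ℕ) :=
  c.t ∪ reach tG c

/-- `b = next(c)`: the `≺`-minimal element of `left(c)`. -/
def IsNext (tG : Finset (N × ℕ × ℕ)) (c : Config N) (b : N × ℕ × ℕ) : Prop :=
  b ∈ leftSet tG c ∧ ∀ b' ∈ leftSet tG c, Enc (span b) (span b')

/-- The dynamic-oracle policy `dyna(c)` as a predicate on actions. -/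
def Dyna (tG : Finset (N × ℕ × ℕ)) (c : Config N) (a : Action N) : Prop :=
  if c.σ.length < 2 then a = Action.sh
  else if Even c.z then
    ∃ b, IsNext tG c b ∧
      (((span b).1 = topI c.σ ∧ topJ c.σ < (span b).2 ∧ a = Action.sh) ∨
       ((span b).1 < topI c.σ ∧ (span b).2 = topJ c.σ ∧ a = Action.comb) ∨
       ((span b).1 < topI c.σ ∧ topJ c.σ < (span b).2 ∧
          (a = Action.sh ∨ a = Action.comb)))
  else
    (∃ X, (X, topI c.σ, topJ c.σ) ∈ tG ∧ a = Action.label X) ∨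
    ((∀ X, (X, topI c.σ, topJ c.σ) ∉ tG) ∧ a = Action.nolabel)

/-- `F1` of a predicted bracket set `t'` against the gold tree `tG`
(`0` when `t' ∩ tG = ∅`). -/
noncomputable def f1 (tG t' : Finset (N × ℕ × ℕ)) : ℝ :=
  if t' ∩ tG = ∅ then 0
  else
    (2 * (((t' ∩ tG).card : ℝ) / (tG.card : ℝ)) * (((t' ∩ tG).card : ℝ) / (t'.card : ℝ))) /
      ((((t' ∩ tG).card : ℝ) / (tG.card : ℝ)) + (((t' ∩ tG).card : ℝ) / (t'.card : ℝ)))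

/-- `F1(c)`: the best `F1` among trees reachable from `c`. -/
noncomputable def configF1 (n : ℕ) (tG : Finset (N × ℕ × ℕ)) (c : Config N) : ℝ :=
  sSup (f1 tG '' Dset n c)

/-- A run of (applicable) actions from one configuration to another. -/
inductive Run (n : ℕ) : Config N → List (Action N) → Config N → Prop
  | refl (c : Config N) : Run n c [] c
  | step {c c' : Config N} {as : List (Action N)} (a : Action N)
      (happ : App n c a) (h : Run n (doAct c a) as c') : Run n c (a :: as) c'

/-- A run all of whose actions follow the dynamic oracle. -/
inductive DynaRun (n : ℕ) (tG : Finset (N × ℕ × ℕ)) : Config N → Config N → Prop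
  | refl (c : Config N) : DynaRun n tG c c
  | step {c c' : Config N} (a : Action N) (happ : App n c a) (hdyna : Dyna tG c a)
      (h : DynaRun n tG (doAct c a) c') : DynaRun n tG c c'

def isSh : Action N → Bool
  | .sh => true
  | _ => false

def isComb : Action N → Bool
  | .comb => true
  | _ => false

/-- Label-step actions: `label-X` or `nolabel`. -/
def isLabelStep : Action N → Bool
  | .label _ => true
  | .nolabel => true
  | _ => false

end SpanParser

/-!
The gold tree is built bottom-up. For a span `(i, j)` with `i + 1 < j`, let `k` be the least
left endpoint `> i` of a gold bracket ending at `j` (or `j - 1` if there is none); since gold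
spans do not cross, every gold bracket inside `(i, j)` other than `(i, j)` itself lies inside
`(i, k)` or inside `(k, j)`. So `(i, j)` is parsed by parsing `(i, k)`, then `(k, j)`, then
combining and labelling, which takes `4 (j - i) - 2` steps. For `(0, n)` this reaches the final
configuration with tree `t_G`, whose F1 is `1`, the largest possible value.
-/

namespace SpanParser

variable {N : Type*}

lemma topJ_append_singleton (σ : List ℕ) (a : ℕ) : topJ (σ ++ [a]) = a :=
  List.getLastD_concat

lemma topJ_append_pair (σ : List ℕ) (a b : ℕ) : topJ (σ ++ [a, b]) = b := by
  simpa using topJ_append_singleton (σ ++ [a]) b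

lemma topI_append_pair (σ : List ℕ) (a b : ℕ) : topI (σ ++ [a, b]) = a := by
  rw [topI, show σ ++ [a, b] = σ ++ [a] ++ [b] by simp, List.dropLast_concat, ← topJ,
    topJ_append_singleton]

def bracketsWithin (t : Finset (N × ℕ × ℕ)) (i j : ℕ) : Finset (N × ℕ × ℕ) :=
  t.filter fun b => i ≤ (span b).1 ∧ (span b).2 ≤ j

def bracketsAt (t : Finset (N × ℕ × ℕ)) (i j : ℕ) : Finset (N × ℕ × ℕ) :=
  t.filter fun b => span b = (i, j)

section

variable {n : ℕ} {tG : Finset (N × ℕ × ℕ)}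

lemma IsGold.nonempty (hG : IsGold n tG) : tG.Nonempty :=
  let ⟨_, hX⟩ := hG.root; ⟨_, hX⟩

lemma IsGold.pos (hG : IsGold n tG) : 0 < n :=
  let ⟨_, hX⟩ := hG.root; (hG.validSpans _ hX).1

lemma IsGold.injOn_span (hG : IsGold n tG) : Set.InjOn span (tG : Set (N × ℕ × ℕ)) :=
  fun _ h₁ _ h₂ => hG.distinctSpans _ h₁ _ h₂

lemma IsGold.bracketsWithin_zero (hG : IsGold n tG) : bracketsWithin tG 0 n = tG :=
  Finset.filter_true_of_mem fun b hb => ⟨Nat.zero_le _, (hG.validSpans b hb).2⟩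

lemma IsGold.bracketsWithin_succ (hG : IsGold n tG) (i : ℕ) :
    bracketsWithin tG i (i + 1) = bracketsAt tG i (i + 1) := by
  refine Finset.filter_congr fun b hb => ?_
  have := (hG.validSpans b hb).1
  rw [Prod.ext_iff]
  omega

end

variable [DecidableEq N]

lemma doAct_sh (z i : ℕ) (σ : List ℕ) (t : Finset (N × ℕ × ℕ)) :
    doAct ⟨z, σ ++ [i], t⟩ .sh = ⟨z + 1, σ ++ [i, i + 1], t⟩ := by
  simp [doAct, topJ_append_singleton]

lemma doAct_comb (z i k j : ℕ) (σ : List ℕ) (t : Finset (N × ℕ × ℕ)) :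
    doAct ⟨z, σ ++ [i, k, j], t⟩ .comb = ⟨z + 1, σ ++ [i, j], t⟩ := by
  simp [doAct, List.dropLast_append_of_ne_nil, topJ]

lemma doAct_label (z i j : ℕ) (σ : List ℕ) (t : Finset (N × ℕ × ℕ)) (X : N) :
    doAct ⟨z, σ ++ [i, j], t⟩ (.label X) = ⟨z + 1, σ ++ [i, j], insert (X, i, j) t⟩ := by
  simp [doAct, topI_append_pair, topJ_append_pair]

lemma bracketsWithin_eq_union {t : Finset (N × ℕ × ℕ)} {i k j : ℕ} (hik : i ≤ k) (hkj : k ≤ j)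
    (hsplit : ∀ b ∈ t, i ≤ (span b).1 → (span b).2 ≤ j → span b ≠ (i, j) →
      (span b).2 ≤ k ∨ k ≤ (span b).1) :
    bracketsWithin t i j = bracketsWithin t i k ∪ bracketsWithin t k j ∪ bracketsAt t i j := by
  ext b
  simp only [bracketsWithin, bracketsAt, Finset.mem_union, Finset.mem_filter]
  by_cases hb : b ∈ t
  · have := hsplit b hb
    simp only [hb, true_and, Ne, Prod.ext_iff] at this ⊢
    omega
  · simp [hb]

section

variable {n : ℕ} {tG : Finset (N × ℕ × ℕ)}

lemma IsGold.exists_split (hG : IsGold n tG) {i j : ℕ} (hij : i + 1 < j) :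
    ∃ k, i < k ∧ k < j ∧ bracketsWithin tG i j =
      bracketsWithin tG i k ∪ bracketsWithin tG k j ∪ bracketsAt tG i j := by
  set P := (tG.filter fun b => i < (span b).1 ∧ (span b).2 = j).image fun b => (span b).1
  have mem_P : ∀ b ∈ tG, i < (span b).1 → (span b).2 = j → (span b).1 ∈ P := fun b hb h₁ h₂ =>
    Finset.mem_image_of_mem _ (Finset.mem_filter.mpr ⟨hb, h₁, h₂⟩)
  obtain ⟨k, hk, hk_min⟩ : ∃ k ∈ insert (j - 1) P, ∀ p ∈ insert (j - 1) P, k ≤ p :=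
    ⟨_, Finset.min'_mem _ (Finset.insert_nonempty _ _), fun p hp => Finset.min'_le _ p hp⟩
  have hkj := hk_min _ (Finset.mem_insert_self _ _)
  replace hk : k = j - 1 ∨ ∃ bk ∈ tG, i < (span bk).1 ∧ (span bk).2 = j ∧ (span bk).1 = k := by
    rcases Finset.mem_insert.mp hk with hk | hk
    · exact .inl hk
    · obtain ⟨bk, hbk, rfl⟩ := Finset.mem_image.mp hk
      obtain ⟨hbk, hi, hj⟩ := Finset.mem_filter.mp hbk
      exact .inr ⟨bk, hbk, hi, hj, rfl⟩
  have hik : i < k := by rcases hk with hk | ⟨_, _, h, _, rfl⟩ <;> omega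
  refine ⟨k, hik, by omega, bracketsWithin_eq_union hik.le (by omega) ?_⟩
  intro b hb hib hbj hne
  by_contra! hcross
  -- a bracket crossing `k` must end at `j`, and then its left endpoint undercuts `k`
  have hend : (span b).2 = j := by
    rcases hk with hk | ⟨bk, hbk, -, hbkj, rfl⟩
    · omega
    · rcases hG.noncrossing b hb bk hbk with ⟨h, -, -⟩ | ⟨-, -, h⟩ | h | h <;> omega
  have hstart : i < (span b).1 := by
    rcases hib.lt_or_eq with h | h
    · exact h
    · exact absurd (Prod.ext h.symm hend) hne
  have := hk_min _ (Finset.mem_insert_of_mem (mem_P b hb hstart hend))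
  omega

lemma reaches_label (hinj : Set.InjOn span (tG : Set (N × ℕ × ℕ))) {z : ℕ} (hz : Odd z)
    (hzn : z < 4 * n - 1) (i j : ℕ) (σ : List ℕ) (t : Finset (N × ℕ × ℕ)) :
    Reaches n ⟨z, σ ++ [i, j], t⟩ ⟨z + 1, σ ++ [i, j], t ∪ bracketsAt tG i j⟩ := by
  by_cases hX : ∃ X, (X, i, j) ∈ tG
  · obtain ⟨X, hX⟩ := hX
    have hAt : bracketsAt tG i j = {(X, i, j)} := by
      ext b
      simp only [bracketsAt, Finset.mem_filter, Finset.mem_singleton]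
      exact ⟨fun ⟨hb, hspan⟩ => hinj hb hX hspan, by rintro rfl; exact ⟨hX, rfl⟩⟩
    refine .single ⟨.label X, ⟨hz, by simp⟩, ?_⟩
    rw [doAct_label, hAt, Finset.union_comm, ← Finset.insert_eq]
  · have hAt : bracketsAt tG i j = ∅ :=
      Finset.filter_eq_empty_iff.mpr fun b hb hspan => hX ⟨b.1, by rw [← hspan]; exact hb⟩
    refine .single ⟨.nolabel, ⟨hz, by simp, hzn⟩, ?_⟩
    simp [doAct, hAt]

lemma reaches_shift_label (hG : IsGold n tG) {z i : ℕ} (hz : Even z) (hin : i < n)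
    (hzn : z + 4 ≤ 4 * n) (σ : List ℕ) (t : Finset (N × ℕ × ℕ)) :
    Reaches n ⟨z, σ ++ [i], t⟩ ⟨z + 2, σ ++ [i, i + 1], t ∪ bracketsWithin tG i (i + 1)⟩ := by
  refine .head ⟨.sh, ⟨hz, by simp, by rwa [topJ_append_singleton]⟩, (doAct_sh z i σ t).symm⟩ ?_
  rw [hG.bracketsWithin_succ]
  exact reaches_label hG.injOn_span hz.add_one (by omega) _ _ _ _

lemma reaches_comb_label (hinj : Set.InjOn span (tG : Set (N × ℕ × ℕ))) {z : ℕ} (hz : Even z)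
    (hzn : z + 4 ≤ 4 * n) (i k j : ℕ) (σ : List ℕ) (t : Finset (N × ℕ × ℕ)) :
    Reaches n ⟨z, σ ++ [i, k, j], t⟩ ⟨z + 2, σ ++ [i, j], t ∪ bracketsAt tG i j⟩ :=
  .head ⟨.comb, ⟨hz, by simp⟩, (doAct_comb z i k j σ t).symm⟩ <|
    reaches_label hinj hz.add_one (by omega) _ _ _ _

lemma reaches_bracketsWithin (hG : IsGold n tG) {i j : ℕ} (hij : i < j) (hjn : j ≤ n) {z : ℕ}
    (hz : Even z) (hzn : z + 4 * (j - i) ≤ 4 * n) (σ : List ℕ) (t : Finset (N × ℕ × ℕ)) :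
    Reaches n ⟨z, σ ++ [i], t⟩ ⟨z + 4 * (j - i) - 2, σ ++ [i, j], t ∪ bracketsWithin tG i j⟩ := by
  induction hd : j - i using Nat.strong_induction_on generalizing i j z σ t with
  | _ d ih =>
  rcases (Nat.succ_le_of_lt hij).eq_or_lt with rfl | hij
  · convert reaches_shift_label hG (i := i) hz (by omega) (by omega) σ t using 3
    omega
  obtain ⟨k, hik, hkj, hsplit⟩ := hG.exists_split hij
  have hz' : Even (z + 4 * (k - i) - 2) := by
    rcases hz with ⟨m, rfl⟩
    exact ⟨m + 2 * (k - i) - 1, by omega⟩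
  have hz'' : Even (z + 4 * (k - i) - 2 + 4 * (j - k) - 2) := by
    rcases hz with ⟨m, rfl⟩
    exact ⟨m + 2 * (j - i) - 2, by omega⟩
  have left := ih _ (by omega) hik (by omega) hz (by omega) σ t rfl
  have right := ih _ (by omega) hkj hjn hz' (by omega) (σ ++ [i]) (t ∪ bracketsWithin tG i k) rfl
  have top := reaches_comb_label (n := n) hG.injOn_span hz'' (by omega) i k j σ
    (t ∪ bracketsWithin tG i k ∪ bracketsWithin tG k j)
  simp only [List.append_assoc, List.cons_append, List.nil_append] at left right
  rw [show z + 4 * d - 2 = z + 4 * (k - i) - 2 + 4 * (j - k) - 2 + 2 by omega, hsplit]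
  simp only [← Finset.union_assoc]
  exact left.trans (right.trans top)

lemma IsGold.mem_Dset_initial (hG : IsGold n tG) : tG ∈ Dset n (initial N) := by
  have hrun := reaches_bracketsWithin hG hG.pos le_rfl (z := 0) Even.zero (by omega) [] ∅
  rw [hG.bracketsWithin_zero] at hrun
  exact ⟨_, hrun, ⟨rfl, by simp⟩, Finset.empty_union tG⟩

lemma two_mul_mul_div_add_le_one {x y : ℝ} (hx : 0 < x) (hx₁ : x ≤ 1) (hy : 0 < y) (hy₁ : y ≤ 1) :
    2 * x * y / (x + y) ≤ 1 := by
  rw [div_le_one (by positivity)]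
  nlinarith [mul_le_of_le_one_right hx.le hy₁, mul_le_of_le_one_left hy.le hx₁]

lemma f1_le_one (t : Finset (N × ℕ × ℕ)) : f1 tG t ≤ 1 := by
  unfold f1
  split_ifs with h
  · exact zero_le_one
  obtain ⟨b, hb⟩ := Finset.nonempty_iff_ne_empty.mpr h
  have hcard : (0 : ℝ) < (t ∩ tG).card := by exact_mod_cast Finset.card_pos.mpr ⟨b, hb⟩
  have hG : (0 : ℝ) < tG.card := by
    exact_mod_cast Finset.card_pos.mpr ⟨b, Finset.mem_of_mem_inter_right hb⟩
  have ht : (0 : ℝ) < t.card := by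
    exact_mod_cast Finset.card_pos.mpr ⟨b, Finset.mem_of_mem_inter_left hb⟩
  exact two_mul_mul_div_add_le_one (div_pos hcard hG)
    (div_le_one_of_le₀ (by exact_mod_cast Finset.card_le_card Finset.inter_subset_right) hG.le)
    (div_pos hcard ht)
    (div_le_one_of_le₀ (by exact_mod_cast Finset.card_le_card Finset.inter_subset_left) ht.le)

lemma f1_self (hne : tG.Nonempty) : f1 tG tG = 1 := by
  have hcard : (tG.card : ℝ) ≠ 0 := by exact_mod_cast hne.card_pos.ne'
  rw [f1, Finset.inter_self, if_neg hne.ne_empty, div_self hcard]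
  norm_num

lemma configF1_eq_one_of_mem_Dset {c : Config N} (hne : tG.Nonempty) (hc : tG ∈ Dset n c) :
    configF1 n tG c = 1 :=
  IsGreatest.csSup_eq ⟨⟨tG, hc, f1_self hne⟩, by rintro _ ⟨t, -, rfl⟩; exact f1_le_one t⟩

end

theorem initial_complete_general (n : ℕ) (tG : Finset (N × ℕ × ℕ))
    (hG : IsGold n tG) :
    tstar tG (initial N) = tG ∧ tG ∈ Dset n (initial N) ∧
      configF1 n tG (initial N) = 1 := by
  have hD := hG.mem_Dset_initial
  exact ⟨by simp [tstar, reach, initial], hD, configF1_eq_one_of_mem_Dset hG.nonempty hD⟩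

/-- Completeness at the initial configuration: `t*(initial) = t_G`, the gold
tree is derivable (`t_G ∈ D(initial)`), and the best achievable F1 from the
initial configuration is perfect: `F1(initial) = 1`. -/
theorem initial_complete (n : ℕ) (hn : 1 ≤ n) (tG : Finset (N × ℕ × ℕ))
    (hG : IsGold n tG) :
    tstar tG (initial N) = tG ∧ tG ∈ Dset n (initial N) ∧
      configF1 n tG (initial N) = 1 :=
  initial_complete_general n tG hG

end SpanParser
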